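/- Loosened one-shot bound for joint source-channel coding over a MAC: Under the setup of the one-shot Cover–El Gamal–Salehi theorem (source pmf q_{S₁S₂}, channel q_{Y|X₁X₂}, common-part functions k₁, k₂ with K = k₁(S₁) = k₂(S₂) on the support, and joint pmf q(s₁,s₂,t,x₁,x₂,y) = q(s₁,s₂)q(t)q(x₁|s₁,t)q(x₂|s₂,t)q(y|x₁,x₂)), for every γ > 0 there exists a code whose probability of error satisfies P[ ψ(Y) ≠ (S₁,S₂) ] ≤ P_q[ i_q(Y;X₁|X₂,S₂,T) − h_q(S₁|S₂) < γ, or i_q(Y;X₂|X₁,S₁,T) − h_q(S₂|S₁) < γ, or i_q(Y;X₁,X₂|K,T) − h_q(S₁,S₂|K) < γ, or i_q(Y;X₁,X₂) − h_q(S₁,S₂) < γ ] + 4·2^{−γ}. -/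

import Mathlib

open scoped BigOperators

/-- A pmf on a finite type, represented by a nonnegative real-valued function summing to 1. -/
structure FinPMF (α : Type) [Fintype α] where
  p : α → ℝ
  nonneg : ∀ a, 0 ≤ p a
  sum_eq_one : ∑ a, p a = 1

open Classical in
/-- Indicator of a proposition, as a real number. -/
noncomputable def ind (P : Prop) : ℝ := if P then 1 else 0

variable {S1 S2 K T X1 X2 Y : Type}
  [Fintype S1] [Fintype S2] [Fintype K] [Fintype T]
  [Fintype X1] [Fintype X2] [Fintype Y]

/-- The joint pmf
`q(s₁,s₂,t,x₁,x₂,y) = q(s₁,s₂) q(t) q(x₁|s₁,t) q(x₂|s₂,t) q(y|x₁,x₂)`. -/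
noncomputable def qMAC (qS : FinPMF (S1 × S2)) (qT : FinPMF T)
    (qX1 : S1 → T → FinPMF X1) (qX2 : S2 → T → FinPMF X2)
    (Wch : X1 → X2 → FinPMF Y)
    (s1 : S1) (s2 : S2) (t : T) (x1 : X1) (x2 : X2) (y : Y) : ℝ :=
  qS.p (s1, s2) * qT.p t * (qX1 s1 t).p x1 * (qX2 s2 t).p x2 * (Wch x1 x2).p y

noncomputable def mgS1 (qS : FinPMF (S1 × S2)) (s1 : S1) : ℝ :=
  ∑ s2 : S2, qS.p (s1, s2)

noncomputable def mgS2 (qS : FinPMF (S1 × S2)) (s2 : S2) : ℝ :=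
  ∑ s1 : S1, qS.p (s1, s2)

/-- Marginal pmf of the common part `K = k₁(S₁)`. -/
noncomputable def mgK (qS : FinPMF (S1 × S2)) (k1 : S1 → K) (k : K) : ℝ :=
  ∑ s1 : S1, ∑ s2 : S2, ind (k1 s1 = k) * qS.p (s1, s2)

section Marginals

variable (qS : FinPMF (S1 × S2)) (qT : FinPMF T)
  (qX1 : S1 → T → FinPMF X1) (qX2 : S2 → T → FinPMF X2) (Wch : X1 → X2 → FinPMF Y)

noncomputable def mX2S2T (x2 : X2) (s2 : S2) (t : T) : ℝ :=
  ∑ s1 : S1, ∑ x1 : X1, ∑ y : Y, qMAC qS qT qX1 qX2 Wch s1 s2 t x1 x2 y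

noncomputable def mX1X2S2T (x1 : X1) (x2 : X2) (s2 : S2) (t : T) : ℝ :=
  ∑ s1 : S1, ∑ y : Y, qMAC qS qT qX1 qX2 Wch s1 s2 t x1 x2 y

noncomputable def mYX2S2T (y : Y) (x2 : X2) (s2 : S2) (t : T) : ℝ :=
  ∑ s1 : S1, ∑ x1 : X1, qMAC qS qT qX1 qX2 Wch s1 s2 t x1 x2 y

noncomputable def mYX1X2S2T (y : Y) (x1 : X1) (x2 : X2) (s2 : S2) (t : T) : ℝ :=
  ∑ s1 : S1, qMAC qS qT qX1 qX2 Wch s1 s2 t x1 x2 y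

noncomputable def mX1S1T (x1 : X1) (s1 : S1) (t : T) : ℝ :=
  ∑ s2 : S2, ∑ x2 : X2, ∑ y : Y, qMAC qS qT qX1 qX2 Wch s1 s2 t x1 x2 y

noncomputable def mX1X2S1T (x1 : X1) (x2 : X2) (s1 : S1) (t : T) : ℝ :=
  ∑ s2 : S2, ∑ y : Y, qMAC qS qT qX1 qX2 Wch s1 s2 t x1 x2 y

noncomputable def mYX1S1T (y : Y) (x1 : X1) (s1 : S1) (t : T) : ℝ :=
  ∑ s2 : S2, ∑ x2 : X2, qMAC qS qT qX1 qX2 Wch s1 s2 t x1 x2 y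

noncomputable def mYX1X2S1T (y : Y) (x1 : X1) (x2 : X2) (s1 : S1) (t : T) : ℝ :=
  ∑ s2 : S2, qMAC qS qT qX1 qX2 Wch s1 s2 t x1 x2 y

noncomputable def mKT (k1 : S1 → K) (k : K) (t : T) : ℝ :=
  ∑ s1 : S1, ∑ s2 : S2, ∑ x1 : X1, ∑ x2 : X2, ∑ y : Y,
    ind (k1 s1 = k) * qMAC qS qT qX1 qX2 Wch s1 s2 t x1 x2 y

noncomputable def mX1X2KT (k1 : S1 → K) (x1 : X1) (x2 : X2) (k : K) (t : T) : ℝ :=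
  ∑ s1 : S1, ∑ s2 : S2, ∑ y : Y,
    ind (k1 s1 = k) * qMAC qS qT qX1 qX2 Wch s1 s2 t x1 x2 y

noncomputable def mYKT (k1 : S1 → K) (y : Y) (k : K) (t : T) : ℝ :=
  ∑ s1 : S1, ∑ s2 : S2, ∑ x1 : X1, ∑ x2 : X2,
    ind (k1 s1 = k) * qMAC qS qT qX1 qX2 Wch s1 s2 t x1 x2 y

noncomputable def mYX1X2KT (k1 : S1 → K) (y : Y) (x1 : X1) (x2 : X2) (k : K) (t : T) : ℝ :=
  ∑ s1 : S1, ∑ s2 : S2,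
    ind (k1 s1 = k) * qMAC qS qT qX1 qX2 Wch s1 s2 t x1 x2 y

noncomputable def mX1X2 (x1 : X1) (x2 : X2) : ℝ :=
  ∑ s1 : S1, ∑ s2 : S2, ∑ t : T, ∑ y : Y, qMAC qS qT qX1 qX2 Wch s1 s2 t x1 x2 y

noncomputable def mY (y : Y) : ℝ :=
  ∑ s1 : S1, ∑ s2 : S2, ∑ t : T, ∑ x1 : X1, ∑ x2 : X2,
    qMAC qS qT qX1 qX2 Wch s1 s2 t x1 x2 y

noncomputable def mYX1X2 (y : Y) (x1 : X1) (x2 : X2) : ℝ :=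
  ∑ s1 : S1, ∑ s2 : S2, ∑ t : T, qMAC qS qT qX1 qX2 Wch s1 s2 t x1 x2 y

/-- Conditional information `h_q(S₁|S₂)`. -/
noncomputable def hS1cS2 (s1 : S1) (s2 : S2) : ℝ :=
  -Real.logb 2 (qS.p (s1, s2) / mgS2 qS s2)

/-- Conditional information `h_q(S₂|S₁)`. -/
noncomputable def hS2cS1 (s1 : S1) (s2 : S2) : ℝ :=
  -Real.logb 2 (qS.p (s1, s2) / mgS1 qS s1)

/-- Conditional information `h_q(S₁,S₂|K)` evaluated at `k = k₁(s₁)`. -/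
noncomputable def hS1S2cK (k1 : S1 → K) (s1 : S1) (s2 : S2) : ℝ :=
  -Real.logb 2 (qS.p (s1, s2) / mgK qS k1 (k1 s1))

/-- Information `h_q(S₁,S₂)`. -/
noncomputable def hS1S2 (s1 : S1) (s2 : S2) : ℝ :=
  -Real.logb 2 (qS.p (s1, s2))

/-- Conditional information density `i_q(Y;X₁|X₂,S₂,T)`. -/
noncomputable def iYX1cX2S2T (y : Y) (x1 : X1) (x2 : X2) (s2 : S2) (t : T) : ℝ :=
  Real.logb 2 (mYX1X2S2T qS qT qX1 qX2 Wch y x1 x2 s2 t * mX2S2T qS qT qX1 qX2 Wch x2 s2 t /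
    (mYX2S2T qS qT qX1 qX2 Wch y x2 s2 t * mX1X2S2T qS qT qX1 qX2 Wch x1 x2 s2 t))

/-- Conditional information density `i_q(Y;X₂|X₁,S₁,T)`. -/
noncomputable def iYX2cX1S1T (y : Y) (x1 : X1) (x2 : X2) (s1 : S1) (t : T) : ℝ :=
  Real.logb 2 (mYX1X2S1T qS qT qX1 qX2 Wch y x1 x2 s1 t * mX1S1T qS qT qX1 qX2 Wch x1 s1 t /
    (mYX1S1T qS qT qX1 qX2 Wch y x1 s1 t * mX1X2S1T qS qT qX1 qX2 Wch x1 x2 s1 t))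

/-- Conditional information density `i_q(Y;X₁,X₂|K,T)`, evaluated at `k`. -/
noncomputable def iYX1X2cKT (k1 : S1 → K) (y : Y) (x1 : X1) (x2 : X2) (k : K) (t : T) : ℝ :=
  Real.logb 2 (mYX1X2KT qS qT qX1 qX2 Wch k1 y x1 x2 k t * mKT qS qT qX1 qX2 Wch k1 k t /
    (mYKT qS qT qX1 qX2 Wch k1 y k t * mX1X2KT qS qT qX1 qX2 Wch k1 x1 x2 k t))

/-- Information density `i_q(Y;X₁,X₂)`. -/
noncomputable def iYX1X2 (y : Y) (x1 : X1) (x2 : X2) : ℝ :=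
  Real.logb 2 (mYX1X2 qS qT qX1 qX2 Wch y x1 x2 /
    (mX1X2 qS qT qX1 qX2 Wch x1 x2 * mY qS qT qX1 qX2 Wch y))

end Marginals

/-- Probability of erroneous decoding `P[ψ(Y) ≠ (S₁,S₂)]` of a code for lossless
transmission of correlated sources over a MAC. -/
noncomputable def pErrorMAC (qS : FinPMF (S1 × S2)) (Wch : X1 → X2 → FinPMF Y)
    (enc1 : S1 → FinPMF X1) (enc2 : S2 → FinPMF X2)
    (dec : Y → FinPMF (S1 × S2)) : ℝ :=
  ∑ s1 : S1, ∑ s2 : S2, ∑ x1 : X1, ∑ x2 : X2, ∑ y : Y,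
    qS.p (s1, s2) * (enc1 s1).p x1 * (enc2 s2).p x2 * (Wch x1 x2).p y *
      (1 - (dec y).p (s1, s2))

/-!
Random coding. Draw a time-sharing symbol `tb k ~ q_T` for every value `k` of the common part
and, given `tb`, independent codewords `c₁ s₁ ~ q(·|s₁, tb (k₁ s₁))` and
`c₂ s₂ ~ q(·|s₂, tb (k₂ s₂))`; decode by sampling the source pair from its posterior given `y`.
If `G` is the likelihood of the true pair `s` and `L` that of all rivals `s' ≠ s`, the error
probability given `y` is at most `min 1 (L / G)`. As `k₁ s₁ = k₂ s₂` almost surely, conditionally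
on the true `(t, x₁, x₂)` the codewords of each of four kinds of rivals have an explicit law, and
the expected likelihood of each kind is at most a marginal of `q` divided by `q(t) q(x₂|s₂,t)`,
`q(t) q(x₁|s₁,t)`, `q(t)` or `1`. Off the event of the theorem the corresponding information
density exceeds the source information by `γ`, which makes each of the four at most `2^{-γ} G`;
on the event, bound the error probability by `1`. Some codebook does at least as well as the
average.
-/

set_option linter.unusedSectionVars false

open Finset

lemma ind_nonneg (P : Prop) : 0 ≤ ind P := by
  unfold ind; split_ifs <;> norm_num

lemma ind_le_one (P : Prop) : ind P ≤ 1 := by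
  unfold ind; split_ifs <;> norm_num

lemma ind_pos {P : Prop} (h : P) : ind P = 1 := by simp [ind, h]

lemma ind_neg {P : Prop} (h : ¬P) : ind P = 0 := by simp [ind, h]

lemma ind_mul_le {a : ℝ} (ha : 0 ≤ a) (P : Prop) : ind P * a ≤ a :=
  mul_le_of_le_one_left ha (ind_le_one P)

lemma ind_le_ind {P Q : Prop} (h : P → Q) : ind P ≤ ind Q := by
  by_cases hP : P
  · rw [ind_pos hP, ind_pos (h hP)]
  · rw [ind_neg hP]; exact ind_nonneg Q

lemma of_ind_mul_ne_zero {P : Prop} {r : ℝ} (h : ind P * r ≠ 0) : P ∧ r ≠ 0 := by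
  by_cases hP : P
  · exact ⟨hP, fun hr => h (by rw [hr, mul_zero])⟩
  · exact absurd (by rw [ind_neg hP, zero_mul]) h

lemma sum_ind_eq_mul {β : Type} [Fintype β] (y : β) (f : β → ℝ) :
    ∑ x, ind (y = x) * f x = f y := by
  classical
  simp [ind]

lemma sum_ind_ne_mul {α : Type} [Fintype α] (f : α → ℝ) (a : α) :
    ∑ b, ind (b ≠ a) * f b = ∑ b, f b - f a := by
  classical
  simp [ind, sum_ite, filter_ne', sum_erase_eq_sub]

lemma min_le_ind_mul_add_ind_mul {a b : ℝ} (ha : 0 ≤ a) (hb : 0 ≤ b) (P : Prop) :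
    min a b ≤ ind P * a + ind (¬P ∧ 0 < a) * b := by
  by_cases hP : P
  · simp [ind_pos hP, ind_neg (fun h : ¬P ∧ 0 < a => h.1 hP)]
  · by_cases ha' : 0 < a
    · simp [ind_neg hP, ind_pos (And.intro hP ha')]
    · obtain rfl : a = 0 := le_antisymm (not_lt.mp ha') ha
      rw [min_eq_left hb, ind_neg hP, zero_mul, zero_add]
      exact mul_nonneg (ind_nonneg _) hb

lemma sum_mul_sum_comm {α β : Type} [Fintype α] [Fintype β] (p : α → ℝ) (q : β → ℝ)
    (f : α → β → ℝ) : ∑ a, p a * ∑ b, q b * f a b = ∑ b, q b * ∑ a, p a * f a b := by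
  simp only [mul_sum]
  rw [sum_comm]
  exact sum_congr rfl fun b _ => sum_congr rfl fun a _ => by ring

lemma sum_pos_of_pos {ι : Type} [Fintype ι] {f : ι → ℝ} (hf : ∀ i, 0 ≤ f i) {i : ι}
    (hi : 0 < f i) : 0 < ∑ j, f j :=
  sum_pos' (fun j _ => hf j) ⟨i, mem_univ i, hi⟩

lemma mul_le_mul_of_nonneg_of_pos_imp {r a b : ℝ} (hr : 0 ≤ r) (h : 0 < r → a ≤ b) :
    r * a ≤ r * b := by
  rcases hr.eq_or_lt with rfl | hr
  · simp
  · exact mul_le_mul_of_nonneg_left (h hr) hr.le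

lemma logb_sub_neg_logb {a b : ℝ} (ha : 0 < a) (hb : 0 < b) :
    Real.logb 2 a - -Real.logb 2 b = Real.logb 2 (a * b) := by
  rw [sub_neg_eq_add, Real.logb_mul ha.ne' hb.ne']

lemma le_rpow_neg_mul_of_le_logb {M B γ : ℝ} (hM : 0 < M) (hB : 0 < B)
    (h : γ ≤ Real.logb 2 (B / M)) : M ≤ (2 : ℝ) ^ (-γ) * B := by
  rw [Real.le_logb_iff_rpow_le (by norm_num) (div_pos hB hM), le_div_iff₀ hM] at h
  rw [Real.rpow_neg (by norm_num), inv_mul_eq_div, le_div_iff₀ (by positivity)]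
  linarith

namespace FinPMF

attribute [simp] FinPMF.sum_eq_one

variable {α β ι : Type} [Fintype α] [Fintype β]

noncomputable def dirac [DecidableEq α] (a : α) : FinPMF α where
  p b := if b = a then 1 else 0
  nonneg b := by split_ifs <;> norm_num
  sum_eq_one := by simp

noncomputable def normalize (f : α → ℝ) (hf : ∀ a, 0 ≤ f a) (P : FinPMF α) : FinPMF α :=
  if h : 0 < ∑ a, f a then
    { p := fun a => f a / ∑ b, f b
      nonneg := fun a => div_nonneg (hf a) h.le
      sum_eq_one := by rw [← sum_div, div_self h.ne'] }
  else P

lemma mul_one_sub_normalize_le (f : α → ℝ) (hf : ∀ a, 0 ≤ f a) (P : FinPMF α) (a : α) :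
    f a * (1 - (normalize f hf P).p a) ≤ min (f a) (∑ b, ind (b ≠ a) * f b) := by
  rw [sum_ind_ne_mul]
  have hle : f a ≤ ∑ b, f b := single_le_sum (fun b _ => hf b) (mem_univ a)
  unfold normalize
  split_ifs with h
  · dsimp only
    rw [show f a * (1 - f a / ∑ b, f b) = f a * (∑ b, f b - f a) / ∑ b, f b by field_simp,
      le_min_iff, div_le_iff₀ h, div_le_iff₀ h]
    constructor <;> nlinarith [hf a]
  · have h0 : f a = 0 := le_antisymm (by linarith [not_lt.mp h]) (hf a)
    simp [h0, le_trans (hf a) hle]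

variable [DecidableEq α]

noncomputable def piExpect (P : α → FinPMF β) (F : (α → β) → ℝ) : ℝ :=
  ∑ c : α → β, (∏ a, (P a).p (c a)) * F c

variable (P : α → FinPMF β)

lemma piExpect_prod (φ : α → β → ℝ) :
    piExpect P (fun c => ∏ a, φ a (c a)) = ∏ a, ∑ x, (P a).p x * φ a x := by
  simp only [piExpect, ← prod_mul_distrib, Fintype.prod_sum]

lemma piExpect_apply (a : α) (f : β → ℝ) :
    piExpect P (fun c => f (c a)) = ∑ x, (P a).p x * f x := by
  simpa [mul_ite] using piExpect_prod P (fun u x => if u = a then f x else 1)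

lemma piExpect_apply_mul_apply {a a' : α} (hne : a ≠ a') (f g : β → ℝ) :
    piExpect P (fun c => f (c a) * g (c a')) = (∑ x, (P a).p x * f x) * ∑ x, (P a').p x * g x := by
  have hprod (c : α → β) :
      (∏ u, if u = a then f (c u) else if u = a' then g (c u) else 1) = f (c a) * g (c a') := by
    rw [prod_eq_mul a a' hne (by intro u _ hu; simp [hu.1, hu.2]) (by simp) (by simp)]
    simp [hne.symm]
  have h := piExpect_prod P (fun u x => if u = a then f x else if u = a' then g x else 1)
  rw [prod_eq_mul a a' hne (by intro u _ hu; simp [hu.1, hu.2]) (by simp)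
    (by simp)] at h
  simpa [hne.symm, hprod] using h

lemma piExpect_sum (s : Finset ι) (F : ι → (α → β) → ℝ) :
    piExpect P (fun c => ∑ i ∈ s, F i c) = ∑ i ∈ s, piExpect P (F i) := by
  simp only [piExpect, mul_sum]
  exact sum_comm

lemma piExpect_apply₂ {a a' : α} (hne : a ≠ a') (F : β → β → ℝ) :
    piExpect P (fun c => F (c a) (c a')) = ∑ x, (P a).p x * ∑ x', (P a').p x' * F x x' := by
  calc piExpect P (fun c => F (c a) (c a'))
      = ∑ x, piExpect P (fun c => ind (c a = x) * F x (c a')) := by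
        rw [← piExpect_sum]
        congr 1; funext c
        exact (sum_ind_eq_mul (c a) (fun x => F x (c a'))).symm
    _ = ∑ x, (P a).p x * ∑ x', (P a').p x' * F x x' := by
        refine sum_congr rfl fun x _ => ?_
        rw [piExpect_apply_mul_apply P hne (fun v => ind (v = x)) (F x)]
        classical
        simp [ind]

lemma piExpect_add (F G : (α → β) → ℝ) :
    piExpect P (fun c => F c + G c) = piExpect P F + piExpect P G := by
  simp only [piExpect, mul_add, sum_add_distrib]

lemma piExpect_const_mul (r : ℝ) (F : (α → β) → ℝ) :
    piExpect P (fun c => r * F c) = r * piExpect P F := by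
  simp only [piExpect, mul_sum]
  exact sum_congr rfl fun c _ => by ring

lemma piExpect_one : piExpect P (fun _ => 1) = 1 := by
  simpa using piExpect_prod P (fun _ _ => 1)

lemma piExpect_const (r : ℝ) : piExpect P (fun _ => r) = r := by
  simpa [piExpect_one] using piExpect_const_mul P r (fun _ => 1)

lemma piExpect_mono {F G : (α → β) → ℝ} (h : ∀ c, F c ≤ G c) : piExpect P F ≤ piExpect P G :=
  sum_le_sum fun c _ =>
    mul_le_mul_of_nonneg_left (h c) (prod_nonneg fun a _ => (P a).nonneg _)

lemma exists_le_piExpect (F : (α → β) → ℝ) : ∃ c, F c ≤ piExpect P F := by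
  by_contra! h
  have hw (c : α → β) : 0 ≤ ∏ a, (P a).p (c a) := prod_nonneg fun a _ => (P a).nonneg _
  obtain ⟨c₀, -, hc₀⟩ : ∃ c ∈ (univ : Finset (α → β)), 0 < ∏ a, (P a).p (c a) := by
    have h1 : ∑ c : α → β, ∏ a, (P a).p (c a) = 1 := by simpa [piExpect] using piExpect_one P
    exact exists_lt_of_sum_lt (by simp [h1])
  have hlt : piExpect P (fun _ => piExpect P F) < piExpect P F :=
    sum_lt_sum (fun c _ => mul_le_mul_of_nonneg_left (h c).le (hw c))
      ⟨c₀, mem_univ _, mul_lt_mul_of_pos_left (h c₀) hc₀⟩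
  rw [piExpect_const] at hlt
  exact lt_irrefl _ hlt

end FinPMF

section Codebook

open FinPMF

variable (qT : FinPMF T) (qX1 : S1 → T → FinPMF X1) (qX2 : S2 → T → FinPMF X2)

noncomputable def inputExpect (s1 : S1) (s2 : S2) (f : T → X1 → X2 → ℝ) : ℝ :=
  ∑ t, qT.p t * ∑ x1, (qX1 s1 t).p x1 * ∑ x2, (qX2 s2 t).p x2 * f t x1 x2

lemma inputExpect_add (s1 : S1) (s2 : S2) (f g : T → X1 → X2 → ℝ) :
    inputExpect qT qX1 qX2 s1 s2 (fun t x1 x2 => f t x1 x2 + g t x1 x2) =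
      inputExpect qT qX1 qX2 s1 s2 f + inputExpect qT qX1 qX2 s1 s2 g := by
  simp only [inputExpect, mul_add, sum_add_distrib]

lemma inputExpect_sum {ι : Type} (s : Finset ι) (s1 : S1) (s2 : S2) (f : ι → T → X1 → X2 → ℝ) :
    inputExpect qT qX1 qX2 s1 s2 (fun t x1 x2 => ∑ i ∈ s, f i t x1 x2) =
      ∑ i ∈ s, inputExpect qT qX1 qX2 s1 s2 (f i) := by
  simp only [inputExpect, mul_sum]
  refine Eq.trans ?_ sum_comm.symm
  refine sum_congr rfl fun t _ => Eq.trans ?_ sum_comm.symm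
  exact sum_congr rfl fun x1 _ => sum_comm

lemma inputExpect_const_mul (s1 : S1) (s2 : S2) (r : ℝ) (f : T → X1 → X2 → ℝ) :
    inputExpect qT qX1 qX2 s1 s2 (fun t x1 x2 => r * f t x1 x2) =
      r * inputExpect qT qX1 qX2 s1 s2 f := by
  simp only [inputExpect, mul_sum]
  exact sum_congr rfl fun _ _ => sum_congr rfl fun _ _ =>
    sum_congr rfl fun _ _ => by ring

lemma inputExpect_mono_of_pos (s1 : S1) (s2 : S2) {f g : T → X1 → X2 → ℝ}
    (h : ∀ t x1 x2, 0 < qT.p t → 0 < (qX1 s1 t).p x1 → 0 < (qX2 s2 t).p x2 →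
      f t x1 x2 ≤ g t x1 x2) :
    inputExpect qT qX1 qX2 s1 s2 f ≤ inputExpect qT qX1 qX2 s1 s2 g :=
  sum_le_sum fun t _ => mul_le_mul_of_nonneg_of_pos_imp (qT.nonneg t) fun ht =>
    sum_le_sum fun x1 _ => mul_le_mul_of_nonneg_of_pos_imp ((qX1 s1 t).nonneg x1)
      fun hx1 => sum_le_sum fun x2 _ =>
        mul_le_mul_of_nonneg_of_pos_imp ((qX2 s2 t).nonneg x2) (h t x1 x2 ht hx1)

variable [DecidableEq K] [DecidableEq S1] [DecidableEq S2] (k1 : S1 → K) (k2 : S2 → K)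

noncomputable def codebookExpect (F : (K → T) → (S1 → X1) → (S2 → X2) → ℝ) : ℝ :=
  piExpect (fun _ => qT) fun tb =>
    piExpect (fun s1 => qX1 s1 (tb (k1 s1))) fun c1 =>
      piExpect (fun s2 => qX2 s2 (tb (k2 s2))) fun c2 => F tb c1 c2

lemma codebookExpect_mono {F G : (K → T) → (S1 → X1) → (S2 → X2) → ℝ}
    (h : ∀ tb c1 c2, F tb c1 c2 ≤ G tb c1 c2) :
    codebookExpect qT qX1 qX2 k1 k2 F ≤ codebookExpect qT qX1 qX2 k1 k2 G :=
  piExpect_mono _ fun tb => piExpect_mono _ fun c1 => piExpect_mono _ fun c2 => h tb c1 c2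

lemma codebookExpect_add (F G : (K → T) → (S1 → X1) → (S2 → X2) → ℝ) :
    codebookExpect qT qX1 qX2 k1 k2 (fun tb c1 c2 => F tb c1 c2 + G tb c1 c2) =
      codebookExpect qT qX1 qX2 k1 k2 F + codebookExpect qT qX1 qX2 k1 k2 G := by
  simp only [codebookExpect, piExpect_add]

lemma codebookExpect_sum {ι : Type} (s : Finset ι)
    (F : ι → (K → T) → (S1 → X1) → (S2 → X2) → ℝ) :
    codebookExpect qT qX1 qX2 k1 k2 (fun tb c1 c2 => ∑ i ∈ s, F i tb c1 c2) =
      ∑ i ∈ s, codebookExpect qT qX1 qX2 k1 k2 (F i) := by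
  simp only [codebookExpect, piExpect_sum]

lemma codebookExpect_const_mul (r : ℝ) (F : (K → T) → (S1 → X1) → (S2 → X2) → ℝ) :
    codebookExpect qT qX1 qX2 k1 k2 (fun tb c1 c2 => r * F tb c1 c2) =
      r * codebookExpect qT qX1 qX2 k1 k2 F := by
  simp only [codebookExpect, piExpect_const_mul]

lemma codebookExpect_const (r : ℝ) : codebookExpect qT qX1 qX2 k1 k2 (fun _ _ _ => r) = r := by
  simp only [codebookExpect, piExpect_const]

lemma exists_le_codebookExpect (F : (K → T) → (S1 → X1) → (S2 → X2) → ℝ) :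
    ∃ tb c1 c2, F tb c1 c2 ≤ codebookExpect qT qX1 qX2 k1 k2 F := by
  obtain ⟨tb, htb⟩ := exists_le_piExpect _ fun tb =>
    piExpect (fun s1 => qX1 s1 (tb (k1 s1))) fun c1 =>
      piExpect (fun s2 => qX2 s2 (tb (k2 s2))) fun c2 => F tb c1 c2
  obtain ⟨c1, hc1⟩ := exists_le_piExpect _ fun c1 =>
    piExpect (fun s2 => qX2 s2 (tb (k2 s2))) fun c2 => F tb c1 c2
  obtain ⟨c2, hc2⟩ := exists_le_piExpect _ fun c2 => F tb c1 c2
  exact ⟨tb, c1, c2, hc2.trans (hc1.trans htb)⟩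

variable {s1 : S1} {s2 : S2}

lemma codebookExpect_pinned (hk : k2 s2 = k1 s1) (F : T → X1 → X2 → ℝ) :
    codebookExpect qT qX1 qX2 k1 k2 (fun tb c1 c2 => F (tb (k1 s1)) (c1 s1) (c2 s2)) =
      inputExpect qT qX1 qX2 s1 s2 F := by
  have h2 (tb : K → T) (c1 : S1 → X1) :
      piExpect (fun s2 => qX2 s2 (tb (k2 s2))) (fun c2 => F (tb (k1 s1)) (c1 s1) (c2 s2)) =
        ∑ x2, (qX2 s2 (tb (k1 s1))).p x2 * F (tb (k1 s1)) (c1 s1) x2 := by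
    rw [piExpect_apply, hk]
  have h1 (tb : K → T) :
      piExpect (fun s1 => qX1 s1 (tb (k1 s1)))
          (fun c1 => ∑ x2, (qX2 s2 (tb (k1 s1))).p x2 * F (tb (k1 s1)) (c1 s1) x2) =
        ∑ x1, (qX1 s1 (tb (k1 s1))).p x1 *
          ∑ x2, (qX2 s2 (tb (k1 s1))).p x2 * F (tb (k1 s1)) x1 x2 :=
    piExpect_apply _ s1 fun x1 => ∑ x2, (qX2 s2 (tb (k1 s1))).p x2 * F (tb (k1 s1)) x1 x2
  simp only [codebookExpect, h2, h1]
  exact piExpect_apply _ (k1 s1) fun t =>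
    ∑ x1, (qX1 s1 t).p x1 * ∑ x2, (qX2 s2 t).p x2 * F t x1 x2

lemma codebookExpect_rival₁ {s1' : S1} (hk : k2 s2 = k1 s1) (hs : s1' ≠ s1)
    (hk' : k1 s1' = k1 s1) (F : T → X1 → X2 → X1 → ℝ) :
    codebookExpect qT qX1 qX2 k1 k2 (fun tb c1 c2 => F (tb (k1 s1)) (c1 s1) (c2 s2) (c1 s1')) =
      inputExpect qT qX1 qX2 s1 s2 fun t x1 x2 => ∑ x1', (qX1 s1' t).p x1' * F t x1 x2 x1' := by
  have h2 (tb : K → T) (c1 : S1 → X1) :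
      piExpect (fun s2 => qX2 s2 (tb (k2 s2)))
          (fun c2 => F (tb (k1 s1)) (c1 s1) (c2 s2) (c1 s1')) =
        ∑ x2, (qX2 s2 (tb (k1 s1))).p x2 * F (tb (k1 s1)) (c1 s1) x2 (c1 s1') := by
    rw [piExpect_apply _ s2 fun x2 => F (tb (k1 s1)) (c1 s1) x2 (c1 s1'), hk]
  have h1 (tb : K → T) :
      piExpect (fun s1 => qX1 s1 (tb (k1 s1)))
          (fun c1 => ∑ x2, (qX2 s2 (tb (k1 s1))).p x2 * F (tb (k1 s1)) (c1 s1) x2 (c1 s1')) =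
        ∑ x1, (qX1 s1 (tb (k1 s1))).p x1 * ∑ x2, (qX2 s2 (tb (k1 s1))).p x2 *
          ∑ x1', (qX1 s1' (tb (k1 s1))).p x1' * F (tb (k1 s1)) x1 x2 x1' := by
    rw [piExpect_apply₂ _ hs.symm fun x1 x1' =>
      ∑ x2, (qX2 s2 (tb (k1 s1))).p x2 * F (tb (k1 s1)) x1 x2 x1', hk']
    simp only [sum_mul_sum_comm (qX1 s1' _).p]
  simp only [codebookExpect, h2, h1]
  exact piExpect_apply _ (k1 s1) fun t => ∑ x1, (qX1 s1 t).p x1 * ∑ x2, (qX2 s2 t).p x2 *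
    ∑ x1', (qX1 s1' t).p x1' * F t x1 x2 x1'

lemma codebookExpect_rival₂ {s2' : S2} (hk : k2 s2 = k1 s1) (hs : s2' ≠ s2)
    (hk' : k2 s2' = k1 s1) (F : T → X1 → X2 → X2 → ℝ) :
    codebookExpect qT qX1 qX2 k1 k2 (fun tb c1 c2 => F (tb (k1 s1)) (c1 s1) (c2 s2) (c2 s2')) =
      inputExpect qT qX1 qX2 s1 s2 fun t x1 x2 => ∑ x2', (qX2 s2' t).p x2' * F t x1 x2 x2' := by
  have h2 (tb : K → T) (c1 : S1 → X1) :
      piExpect (fun s2 => qX2 s2 (tb (k2 s2)))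
          (fun c2 => F (tb (k1 s1)) (c1 s1) (c2 s2) (c2 s2')) =
        ∑ x2, (qX2 s2 (tb (k1 s1))).p x2 *
          ∑ x2', (qX2 s2' (tb (k1 s1))).p x2' * F (tb (k1 s1)) (c1 s1) x2 x2' := by
    rw [piExpect_apply₂ _ hs.symm fun x2 x2' => F (tb (k1 s1)) (c1 s1) x2 x2', hk, hk']
  have h1 (tb : K → T) :
      piExpect (fun s1 => qX1 s1 (tb (k1 s1))) (fun c1 => ∑ x2, (qX2 s2 (tb (k1 s1))).p x2 *
          ∑ x2', (qX2 s2' (tb (k1 s1))).p x2' * F (tb (k1 s1)) (c1 s1) x2 x2') =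
        ∑ x1, (qX1 s1 (tb (k1 s1))).p x1 * ∑ x2, (qX2 s2 (tb (k1 s1))).p x2 *
          ∑ x2', (qX2 s2' (tb (k1 s1))).p x2' * F (tb (k1 s1)) x1 x2 x2' :=
    piExpect_apply _ s1 fun x1 => ∑ x2, (qX2 s2 (tb (k1 s1))).p x2 *
      ∑ x2', (qX2 s2' (tb (k1 s1))).p x2' * F (tb (k1 s1)) x1 x2 x2'
  simp only [codebookExpect, h2, h1]
  exact piExpect_apply _ (k1 s1) fun t => ∑ x1, (qX1 s1 t).p x1 * ∑ x2, (qX2 s2 t).p x2 *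
    ∑ x2', (qX2 s2' t).p x2' * F t x1 x2 x2'

lemma codebookExpect_rival₃ {s1' : S1} {s2' : S2} (hk : k2 s2 = k1 s1) (hs1 : s1' ≠ s1)
    (hs2 : s2' ≠ s2) (hk1 : k1 s1' = k1 s1) (hk2 : k2 s2' = k1 s1)
    (F : T → X1 → X2 → X1 → X2 → ℝ) :
    codebookExpect qT qX1 qX2 k1 k2
        (fun tb c1 c2 => F (tb (k1 s1)) (c1 s1) (c2 s2) (c1 s1') (c2 s2')) =
      inputExpect qT qX1 qX2 s1 s2 fun t x1 x2 =>
        ∑ x1', (qX1 s1' t).p x1' * ∑ x2', (qX2 s2' t).p x2' * F t x1 x2 x1' x2' := by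
  have h2 (tb : K → T) (c1 : S1 → X1) :
      piExpect (fun s2 => qX2 s2 (tb (k2 s2)))
          (fun c2 => F (tb (k1 s1)) (c1 s1) (c2 s2) (c1 s1') (c2 s2')) =
        ∑ x2, (qX2 s2 (tb (k1 s1))).p x2 *
          ∑ x2', (qX2 s2' (tb (k1 s1))).p x2' * F (tb (k1 s1)) (c1 s1) x2 (c1 s1') x2' := by
    rw [piExpect_apply₂ _ hs2.symm fun x2 x2' => F (tb (k1 s1)) (c1 s1) x2 (c1 s1') x2', hk, hk2]
  have h1 (tb : K → T) :
      piExpect (fun s1 => qX1 s1 (tb (k1 s1))) (fun c1 => ∑ x2, (qX2 s2 (tb (k1 s1))).p x2 *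
          ∑ x2', (qX2 s2' (tb (k1 s1))).p x2' * F (tb (k1 s1)) (c1 s1) x2 (c1 s1') x2') =
        ∑ x1, (qX1 s1 (tb (k1 s1))).p x1 * ∑ x2, (qX2 s2 (tb (k1 s1))).p x2 *
          ∑ x1', (qX1 s1' (tb (k1 s1))).p x1' *
            ∑ x2', (qX2 s2' (tb (k1 s1))).p x2' * F (tb (k1 s1)) x1 x2 x1' x2' := by
    rw [piExpect_apply₂ _ hs1.symm fun x1 x1' => ∑ x2, (qX2 s2 (tb (k1 s1))).p x2 *
      ∑ x2', (qX2 s2' (tb (k1 s1))).p x2' * F (tb (k1 s1)) x1 x2 x1' x2', hk1]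
    simp only [sum_mul_sum_comm (qX1 s1' _).p]
  simp only [codebookExpect, h2, h1]
  exact piExpect_apply _ (k1 s1) fun t => ∑ x1, (qX1 s1 t).p x1 * ∑ x2, (qX2 s2 t).p x2 *
    ∑ x1', (qX1 s1' t).p x1' * ∑ x2', (qX2 s2' t).p x2' * F t x1 x2 x1' x2'

lemma codebookExpect_rival₄ {s1' : S1} {s2' : S2} (hk : k2 s2 = k1 s1) (hs1 : s1' ≠ s1)
    (hs2 : s2' ≠ s2) (hk1 : k1 s1' ≠ k1 s1) (hk2 : k2 s2' = k1 s1')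
    (F : T → X1 → X2 → X1 → X2 → ℝ) :
    codebookExpect qT qX1 qX2 k1 k2
        (fun tb c1 c2 => F (tb (k1 s1)) (c1 s1) (c2 s2) (c1 s1') (c2 s2')) =
      inputExpect qT qX1 qX2 s1 s2 fun t x1 x2 => ∑ t', qT.p t' *
        ∑ x1', (qX1 s1' t').p x1' * ∑ x2', (qX2 s2' t').p x2' * F t x1 x2 x1' x2' := by
  have h2 (tb : K → T) (c1 : S1 → X1) :
      piExpect (fun s2 => qX2 s2 (tb (k2 s2)))
          (fun c2 => F (tb (k1 s1)) (c1 s1) (c2 s2) (c1 s1') (c2 s2')) =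
        ∑ x2, (qX2 s2 (tb (k1 s1))).p x2 *
          ∑ x2', (qX2 s2' (tb (k1 s1'))).p x2' * F (tb (k1 s1)) (c1 s1) x2 (c1 s1') x2' := by
    rw [piExpect_apply₂ _ hs2.symm fun x2 x2' => F (tb (k1 s1)) (c1 s1) x2 (c1 s1') x2', hk, hk2]
  have h1 (tb : K → T) :
      piExpect (fun s1 => qX1 s1 (tb (k1 s1))) (fun c1 => ∑ x2, (qX2 s2 (tb (k1 s1))).p x2 *
          ∑ x2', (qX2 s2' (tb (k1 s1'))).p x2' * F (tb (k1 s1)) (c1 s1) x2 (c1 s1') x2') =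
        ∑ x1, (qX1 s1 (tb (k1 s1))).p x1 * ∑ x2, (qX2 s2 (tb (k1 s1))).p x2 *
          ∑ x1', (qX1 s1' (tb (k1 s1'))).p x1' *
            ∑ x2', (qX2 s2' (tb (k1 s1'))).p x2' * F (tb (k1 s1)) x1 x2 x1' x2' := by
    rw [piExpect_apply₂ _ hs1.symm fun x1 x1' => ∑ x2, (qX2 s2 (tb (k1 s1))).p x2 *
      ∑ x2', (qX2 s2' (tb (k1 s1'))).p x2' * F (tb (k1 s1)) x1 x2 x1' x2']
    simp only [sum_mul_sum_comm (qX1 s1' _).p]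
  simp only [codebookExpect, h2, h1]
  rw [piExpect_apply₂ _ hk1.symm fun t t' => ∑ x1, (qX1 s1 t).p x1 * ∑ x2, (qX2 s2 t).p x2 *
    ∑ x1', (qX1 s1' t').p x1' * ∑ x2', (qX2 s2' t').p x2' * F t x1 x2 x1' x2']
  refine sum_congr rfl fun t _ => ?_
  rw [sum_mul_sum_comm qT.p]
  refine congrArg _ (sum_congr rfl fun x1 _ => ?_)
  rw [sum_mul_sum_comm qT.p]

lemma codebookExpect_pinned_mul_sum {ι : Type} [Fintype ι] (f : T → X1 → X2 → ℝ) (a : ι → ℝ)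
    (G : ι → (K → T) → (S1 → X1) → (S2 → X2) → ℝ) (H : ι → T → X1 → X2 → ℝ)
    (hGH : ∀ i, a i ≠ 0 → codebookExpect qT qX1 qX2 k1 k2
        (fun tb c1 c2 => f (tb (k1 s1)) (c1 s1) (c2 s2) * G i tb c1 c2) =
      inputExpect qT qX1 qX2 s1 s2 (fun t x1 x2 => f t x1 x2 * H i t x1 x2)) :
    codebookExpect qT qX1 qX2 k1 k2
        (fun tb c1 c2 => f (tb (k1 s1)) (c1 s1) (c2 s2) * ∑ i, a i * G i tb c1 c2) =
      inputExpect qT qX1 qX2 s1 s2 (fun t x1 x2 => f t x1 x2 * ∑ i, a i * H i t x1 x2) := by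
  have hpull (u : ℝ) (v : ι → ℝ) : u * ∑ i, a i * v i = ∑ i, a i * (u * v i) := by
    rw [mul_sum]
    exact sum_congr rfl fun i _ => by ring
  simp only [hpull, codebookExpect_sum, codebookExpect_const_mul, inputExpect_sum,
    inputExpect_const_mul]
  refine sum_congr rfl fun i _ => ?_
  by_cases hi : a i = 0
  · simp [hi]
  · rw [hGH i hi]

end Codebook

section Decoding

open FinPMF

variable (qS : FinPMF (S1 × S2)) (Wch : X1 → X2 → FinPMF Y)

noncomputable def posteriorDecoder (c1 : S1 → X1) (c2 : S2 → X2) (y : Y) : FinPMF (S1 × S2) :=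
  normalize (fun s => qS.p s * (Wch (c1 s.1) (c2 s.2)).p y)
    (fun s => mul_nonneg (qS.nonneg s) ((Wch _ _).nonneg y)) qS

/- The likelihoods of `y` summed over the rivals `s'` of `s` of each kind: `s₁' ≠ s₁` only,
`s₂' ≠ s₂` only, both with the same common part, both with another one. -/

noncomputable def rivalLik₁ (c1 : S1 → X1) (c2 : S2 → X2) (s1 : S1) (s2 : S2) (y : Y) : ℝ :=
  ∑ s1', ind (s1' ≠ s1) * (qS.p (s1', s2) * (Wch (c1 s1') (c2 s2)).p y)

noncomputable def rivalLik₂ (c1 : S1 → X1) (c2 : S2 → X2) (s1 : S1) (s2 : S2) (y : Y) : ℝ :=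
  ∑ s2', ind (s2' ≠ s2) * (qS.p (s1, s2') * (Wch (c1 s1) (c2 s2')).p y)

noncomputable def rivalLik₃ (k1 : S1 → K) (c1 : S1 → X1) (c2 : S2 → X2) (s1 : S1) (s2 : S2)
    (y : Y) : ℝ :=
  ∑ s', ind (s'.1 ≠ s1 ∧ s'.2 ≠ s2 ∧ k1 s'.1 = k1 s1) * (qS.p s' * (Wch (c1 s'.1) (c2 s'.2)).p y)

noncomputable def rivalLik₄ (k1 : S1 → K) (c1 : S1 → X1) (c2 : S2 → X2) (s1 : S1) (s2 : S2)
    (y : Y) : ℝ :=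
  ∑ s', ind (s'.1 ≠ s1 ∧ s'.2 ≠ s2 ∧ k1 s'.1 ≠ k1 s1) * (qS.p s' * (Wch (c1 s'.1) (c2 s'.2)).p y)

lemma pErrorMAC_dirac [DecidableEq X1] [DecidableEq X2] (c1 : S1 → X1) (c2 : S2 → X2)
    (dec : Y → FinPMF (S1 × S2)) :
    pErrorMAC qS Wch (fun s1 => dirac (c1 s1)) (fun s2 => dirac (c2 s2)) dec =
      ∑ s1, ∑ s2, ∑ y, qS.p (s1, s2) * (Wch (c1 s1) (c2 s2)).p y * (1 - (dec y).p (s1, s2)) := by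
  simp [pErrorMAC, dirac]

lemma sum_ind_ne_eq_rivals (k1 : S1 → K) (s1 : S1) (s2 : S2) (g : S1 × S2 → ℝ) :
    ∑ s', ind (s' ≠ (s1, s2)) * g s' =
      ∑ s1', ind (s1' ≠ s1) * g (s1', s2) + ∑ s2', ind (s2' ≠ s2) * g (s1, s2') +
        ∑ s', ind (s'.1 ≠ s1 ∧ s'.2 ≠ s2 ∧ k1 s'.1 = k1 s1) * g s' +
        ∑ s', ind (s'.1 ≠ s1 ∧ s'.2 ≠ s2 ∧ k1 s'.1 ≠ k1 s1) * g s' := by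
  classical
  have hsplit (s' : S1 × S2) : ind (s' ≠ (s1, s2)) = ind (s'.1 ≠ s1 ∧ s'.2 = s2) +
      ind (s'.1 = s1 ∧ s'.2 ≠ s2) + ind (s'.1 ≠ s1 ∧ s'.2 ≠ s2 ∧ k1 s'.1 = k1 s1) +
      ind (s'.1 ≠ s1 ∧ s'.2 ≠ s2 ∧ k1 s'.1 ≠ k1 s1) := by
    obtain ⟨a, b⟩ := s'
    by_cases ha : a = s1 <;> by_cases hb : b = s2 <;> by_cases hk : k1 a = k1 s1 <;>
      simp [ind, ha, hb, hk]
  simp only [hsplit, add_mul, sum_add_distrib]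
  congr 3
  · simp [ind, Fintype.sum_prod_type, ite_and]
  · simp [ind, Fintype.sum_prod_type, ite_and]

lemma error_le_ind_add_rivalLik (k1 : S1 → K) (s1 : S1) (s2 : S2) (c1 : S1 → X1)
    (c2 : S2 → X2) (y : Y) (P : Prop) :
    qS.p (s1, s2) * (Wch (c1 s1) (c2 s2)).p y * (1 - (posteriorDecoder qS Wch c1 c2 y).p (s1, s2)) ≤
      ind P * (qS.p (s1, s2) * (Wch (c1 s1) (c2 s2)).p y) +
      ind (¬P ∧ 0 < qS.p (s1, s2) * (Wch (c1 s1) (c2 s2)).p y) *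
        (rivalLik₁ qS Wch c1 c2 s1 s2 y + rivalLik₂ qS Wch c1 c2 s1 s2 y +
          rivalLik₃ qS Wch k1 c1 c2 s1 s2 y + rivalLik₄ qS Wch k1 c1 c2 s1 s2 y) := by
  set f : S1 × S2 → ℝ := fun s => qS.p s * (Wch (c1 s.1) (c2 s.2)).p y
  have hf (s : S1 × S2) : 0 ≤ f s := mul_nonneg (qS.nonneg s) ((Wch _ _).nonneg y)
  have hL : 0 ≤ ∑ s', ind (s' ≠ (s1, s2)) * f s' :=
    sum_nonneg fun s' _ => mul_nonneg (ind_nonneg _) (hf s')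
  have h := mul_one_sub_normalize_le f hf qS (s1, s2)
  rw [sum_ind_ne_eq_rivals k1 s1 s2] at h hL
  exact h.trans (min_le_ind_mul_add_ind_mul (hf _) hL P)

end Decoding

lemma qMAC_nonneg {qS : FinPMF (S1 × S2)} {qT : FinPMF T} {qX1 : S1 → T → FinPMF X1}
    {qX2 : S2 → T → FinPMF X2} {Wch : X1 → X2 → FinPMF Y} {s1 s2 t x1 x2 y} :
    0 ≤ qMAC qS qT qX1 qX2 Wch s1 s2 t x1 x2 y := by
  unfold qMAC
  have := qS.nonneg (s1, s2); have := qT.nonneg t; have := (qX1 s1 t).nonneg x1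
  have := (qX2 s2 t).nonneg x2; have := (Wch x1 x2).nonneg y
  positivity

section JointLaw

variable (qS : FinPMF (S1 × S2)) (qT : FinPMF T) (qX1 : S1 → T → FinPMF X1)
  (qX2 : S2 → T → FinPMF X2) (Wch : X1 → X2 → FinPMF Y) (k1 : S1 → K)

/- The conditional expectations of `rivalLik₁`, …, `rivalLik₄` over the codebook given the true
`(t, x₁, x₂)`; see `codebookExpect_mul_rivals₁`, …, `codebookExpect_mul_rivals₄`. -/

noncomputable def meanRivalLik₁ (s1 : S1) (s2 : S2) (t : T) (x2 : X2) (y : Y) : ℝ :=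
  ∑ s1', ind (s1' ≠ s1) * qS.p (s1', s2) * ∑ x1', (qX1 s1' t).p x1' * (Wch x1' x2).p y

noncomputable def meanRivalLik₂ (s1 : S1) (s2 : S2) (t : T) (x1 : X1) (y : Y) : ℝ :=
  ∑ s2', ind (s2' ≠ s2) * qS.p (s1, s2') * ∑ x2', (qX2 s2' t).p x2' * (Wch x1 x2').p y

noncomputable def meanRivalLik₃ (s1 : S1) (s2 : S2) (t : T) (y : Y) : ℝ :=
  ∑ s', ind (s'.1 ≠ s1 ∧ s'.2 ≠ s2 ∧ k1 s'.1 = k1 s1) * qS.p s' *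
    ∑ x1', (qX1 s'.1 t).p x1' * ∑ x2', (qX2 s'.2 t).p x2' * (Wch x1' x2').p y

noncomputable def meanRivalLik₄ (s1 : S1) (s2 : S2) (y : Y) : ℝ :=
  ∑ s', ind (s'.1 ≠ s1 ∧ s'.2 ≠ s2 ∧ k1 s'.1 ≠ k1 s1) * qS.p s' *
    ∑ t', qT.p t' * ∑ x1', (qX1 s'.1 t').p x1' * ∑ x2', (qX2 s'.2 t').p x2' * (Wch x1' x2').p y

def macErrorEvent (γ : ℝ) (s1 : S1) (s2 : S2) (t : T) (x1 : X1) (x2 : X2) (y : Y) : Prop :=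
  iYX1cX2S2T qS qT qX1 qX2 Wch y x1 x2 s2 t - hS1cS2 qS s1 s2 < γ ∨
  iYX2cX1S1T qS qT qX1 qX2 Wch y x1 x2 s1 t - hS2cS1 qS s1 s2 < γ ∨
  iYX1X2cKT qS qT qX1 qX2 Wch k1 y x1 x2 (k1 s1) t - hS1S2cK qS k1 s1 s2 < γ ∨
  iYX1X2 qS qT qX1 qX2 Wch y x1 x2 - hS1S2 qS s1 s2 < γ

variable {s1 : S1} {s2 : S2} {t : T} {x1 : X1} {x2 : X2} {y : Y}

lemma pos_of_qMAC_pos (h : 0 < qMAC qS qT qX1 qX2 Wch s1 s2 t x1 x2 y) :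
    0 < qS.p (s1, s2) ∧ 0 < qT.p t ∧ 0 < (qX1 s1 t).p x1 ∧ 0 < (qX2 s2 t).p x2 ∧
      0 < (Wch x1 x2).p y := by
  have h0 := qS.nonneg (s1, s2); have h1 := qT.nonneg t; have h2 := (qX1 s1 t).nonneg x1
  have h3 := (qX2 s2 t).nonneg x2; have h4 := (Wch x1 x2).nonneg y
  unfold qMAC at h
  refine ⟨?_, ?_, ?_, ?_, ?_⟩ <;> refine lt_of_le_of_ne ‹_› fun he => ?_ <;>
    simp [← he] at h

lemma qMAC_sum : ∑ s1, ∑ s2, ∑ t, ∑ x1, ∑ x2, ∑ y, qMAC qS qT qX1 qX2 Wch s1 s2 t x1 x2 y = 1 := by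
  simp only [qMAC, ← mul_sum, FinPMF.sum_eq_one, mul_one]
  rw [← Fintype.sum_prod_type', qS.sum_eq_one]

lemma qMAC_eq_mul_sum : qMAC qS qT qX1 qX2 Wch s1 s2 t x1 x2 y =
    (Wch x1 x2).p y * ∑ y', qMAC qS qT qX1 qX2 Wch s1 s2 t x1 x2 y' := by
  simp only [qMAC, ← mul_sum, FinPMF.sum_eq_one, mul_one]
  ring

lemma mYX1X2S2T_eq : mYX1X2S2T qS qT qX1 qX2 Wch y x1 x2 s2 t =
    (Wch x1 x2).p y * mX1X2S2T qS qT qX1 qX2 Wch x1 x2 s2 t := by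
  rw [mYX1X2S2T, mX1X2S2T, mul_sum]
  exact sum_congr rfl fun _ _ => qMAC_eq_mul_sum qS qT qX1 qX2 Wch

lemma mX2S2T_eq : mX2S2T qS qT qX1 qX2 Wch x2 s2 t = qT.p t * (qX2 s2 t).p x2 * mgS2 qS s2 := by
  simp only [mX2S2T, mgS2, qMAC, ← mul_sum, ← sum_mul, FinPMF.sum_eq_one, mul_one]
  ring

lemma mYX1X2S1T_eq : mYX1X2S1T qS qT qX1 qX2 Wch y x1 x2 s1 t =
    (Wch x1 x2).p y * mX1X2S1T qS qT qX1 qX2 Wch x1 x2 s1 t := by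
  rw [mYX1X2S1T, mX1X2S1T, mul_sum]
  exact sum_congr rfl fun _ _ => qMAC_eq_mul_sum qS qT qX1 qX2 Wch

lemma mX1S1T_eq : mX1S1T qS qT qX1 qX2 Wch x1 s1 t = qT.p t * (qX1 s1 t).p x1 * mgS1 qS s1 := by
  simp only [mX1S1T, mgS1, qMAC, ← mul_sum, ← sum_mul, FinPMF.sum_eq_one, mul_one]
  ring

lemma mYX1X2KT_eq (k : K) : mYX1X2KT qS qT qX1 qX2 Wch k1 y x1 x2 k t =
    (Wch x1 x2).p y * mX1X2KT qS qT qX1 qX2 Wch k1 x1 x2 k t := by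
  simp only [mYX1X2KT, mX1X2KT, mul_sum]
  refine sum_congr rfl fun _ _ => sum_congr rfl fun _ _ => ?_
  rw [qMAC_eq_mul_sum, mul_sum, mul_sum]
  exact sum_congr rfl fun _ _ => by ring

lemma mKT_eq (k : K) : mKT qS qT qX1 qX2 Wch k1 k t = qT.p t * mgK qS k1 k := by
  simp only [mKT, mgK, qMAC, ← mul_sum, ← sum_mul, FinPMF.sum_eq_one, mul_one]
  rw [mul_sum]
  exact sum_congr rfl fun _ _ => by ring

lemma mYX1X2_eq : mYX1X2 qS qT qX1 qX2 Wch y x1 x2 =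
    (Wch x1 x2).p y * mX1X2 qS qT qX1 qX2 Wch x1 x2 := by
  simp only [mYX1X2, mX1X2, mul_sum]
  exact sum_congr rfl fun _ _ => sum_congr rfl fun _ _ =>
    sum_congr rfl fun _ _ => by rw [qMAC_eq_mul_sum, mul_sum]

lemma mYX2S2T_le {γ : ℝ} (hpos : 0 < qMAC qS qT qX1 qX2 Wch s1 s2 t x1 x2 y)
    (hγ : γ ≤ iYX1cX2S2T qS qT qX1 qX2 Wch y x1 x2 s2 t - hS1cS2 qS s1 s2) :
    mYX2S2T qS qT qX1 qX2 Wch y x2 s2 t ≤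
      2 ^ (-γ) * (qS.p (s1, s2) * (Wch x1 x2).p y * (qT.p t * (qX2 s2 t).p x2)) := by
  obtain ⟨hq, ht, -, hx2, hW⟩ := pos_of_qMAC_pos qS qT qX1 qX2 Wch hpos
  have hM : 0 < mYX2S2T qS qT qX1 qX2 Wch y x2 s2 t := by
    rw [mYX2S2T, ← Fintype.sum_prod_type']
    exact sum_pos_of_pos (fun _ => qMAC_nonneg) (i := (s1, x1)) hpos
  have hm : 0 < mX1X2S2T qS qT qX1 qX2 Wch x1 x2 s2 t := by
    rw [mX1X2S2T, ← Fintype.sum_prod_type']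
    exact sum_pos_of_pos (fun _ => qMAC_nonneg) (i := (s1, y)) hpos
  have hg : 0 < mgS2 qS s2 := sum_pos_of_pos (fun _ => qS.nonneg _) hq
  refine le_rpow_neg_mul_of_le_logb hM (by positivity) (hγ.trans_eq ?_)
  rw [iYX1cX2S2T, hS1cS2, mYX1X2S2T_eq, mX2S2T_eq,
    logb_sub_neg_logb (by positivity) (by positivity)]
  congr 1
  field_simp

lemma mul_meanRivalLik₁_le_mYX2S2T :
    qT.p t * (qX2 s2 t).p x2 * meanRivalLik₁ qS qX1 Wch s1 s2 t x2 y ≤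
    mYX2S2T qS qT qX1 qX2 Wch y x2 s2 t := by
  rw [meanRivalLik₁, mul_sum]
  refine sum_le_sum fun s1' _ => ?_
  calc _ = ind (s1' ≠ s1) * ∑ x1', qMAC qS qT qX1 qX2 Wch s1' s2 t x1' x2 y := by
        simp only [qMAC, mul_sum]
        exact sum_congr rfl fun _ _ => by ring
    _ ≤ _ := ind_mul_le (sum_nonneg fun _ _ => qMAC_nonneg) _

lemma meanRivalLik₁_le {γ : ℝ} (hpos : 0 < qMAC qS qT qX1 qX2 Wch s1 s2 t x1 x2 y)
    (hγ : γ ≤ iYX1cX2S2T qS qT qX1 qX2 Wch y x1 x2 s2 t - hS1cS2 qS s1 s2) :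
    meanRivalLik₁ qS qX1 Wch s1 s2 t x2 y ≤ 2 ^ (-γ) * (qS.p (s1, s2) * (Wch x1 x2).p y) := by
  obtain ⟨-, ht, -, hx2, -⟩ := pos_of_qMAC_pos qS qT qX1 qX2 Wch hpos
  refine le_of_mul_le_mul_left ?_ (mul_pos ht hx2)
  calc _ ≤ _ := mul_meanRivalLik₁_le_mYX2S2T qS qT qX1 qX2 Wch
    _ ≤ _ := mYX2S2T_le qS qT qX1 qX2 Wch hpos hγ
    _ = _ := by ring

lemma mYX1S1T_le {γ : ℝ} (hpos : 0 < qMAC qS qT qX1 qX2 Wch s1 s2 t x1 x2 y)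
    (hγ : γ ≤ iYX2cX1S1T qS qT qX1 qX2 Wch y x1 x2 s1 t - hS2cS1 qS s1 s2) :
    mYX1S1T qS qT qX1 qX2 Wch y x1 s1 t ≤
      2 ^ (-γ) * (qS.p (s1, s2) * (Wch x1 x2).p y * (qT.p t * (qX1 s1 t).p x1)) := by
  obtain ⟨hq, ht, hx1, -, hW⟩ := pos_of_qMAC_pos qS qT qX1 qX2 Wch hpos
  have hM : 0 < mYX1S1T qS qT qX1 qX2 Wch y x1 s1 t := by
    rw [mYX1S1T, ← Fintype.sum_prod_type']
    exact sum_pos_of_pos (fun _ => qMAC_nonneg) (i := (s2, x2)) hpos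
  have hm : 0 < mX1X2S1T qS qT qX1 qX2 Wch x1 x2 s1 t := by
    rw [mX1X2S1T, ← Fintype.sum_prod_type']
    exact sum_pos_of_pos (fun _ => qMAC_nonneg) (i := (s2, y)) hpos
  have hg : 0 < mgS1 qS s1 := sum_pos_of_pos (fun _ => qS.nonneg _) hq
  refine le_rpow_neg_mul_of_le_logb hM (by positivity) (hγ.trans_eq ?_)
  rw [iYX2cX1S1T, hS2cS1, mYX1X2S1T_eq, mX1S1T_eq,
    logb_sub_neg_logb (by positivity) (by positivity)]
  congr 1
  field_simp

lemma mul_meanRivalLik₂_le_mYX1S1T :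
    qT.p t * (qX1 s1 t).p x1 * meanRivalLik₂ qS qX2 Wch s1 s2 t x1 y ≤
    mYX1S1T qS qT qX1 qX2 Wch y x1 s1 t := by
  rw [meanRivalLik₂, mul_sum]
  refine sum_le_sum fun s2' _ => ?_
  calc _ = ind (s2' ≠ s2) * ∑ x2', qMAC qS qT qX1 qX2 Wch s1 s2' t x1 x2' y := by
        simp only [qMAC, mul_sum]
        exact sum_congr rfl fun _ _ => by ring
    _ ≤ _ := ind_mul_le (sum_nonneg fun _ _ => qMAC_nonneg) _

lemma meanRivalLik₂_le {γ : ℝ} (hpos : 0 < qMAC qS qT qX1 qX2 Wch s1 s2 t x1 x2 y)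
    (hγ : γ ≤ iYX2cX1S1T qS qT qX1 qX2 Wch y x1 x2 s1 t - hS2cS1 qS s1 s2) :
    meanRivalLik₂ qS qX2 Wch s1 s2 t x1 y ≤ 2 ^ (-γ) * (qS.p (s1, s2) * (Wch x1 x2).p y) := by
  obtain ⟨-, ht, hx1, -, -⟩ := pos_of_qMAC_pos qS qT qX1 qX2 Wch hpos
  refine le_of_mul_le_mul_left ?_ (mul_pos ht hx1)
  calc _ ≤ _ := mul_meanRivalLik₂_le_mYX1S1T qS qT qX1 qX2 Wch
    _ ≤ _ := mYX1S1T_le qS qT qX1 qX2 Wch hpos hγ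
    _ = _ := by ring

lemma mYKT_le {γ : ℝ} (hpos : 0 < qMAC qS qT qX1 qX2 Wch s1 s2 t x1 x2 y)
    (hγ : γ ≤ iYX1X2cKT qS qT qX1 qX2 Wch k1 y x1 x2 (k1 s1) t - hS1S2cK qS k1 s1 s2) :
    mYKT qS qT qX1 qX2 Wch k1 y (k1 s1) t ≤
      2 ^ (-γ) * (qS.p (s1, s2) * (Wch x1 x2).p y * qT.p t) := by
  obtain ⟨hq, ht, -, -, hW⟩ := pos_of_qMAC_pos qS qT qX1 qX2 Wch hpos
  have hpos' : 0 < ind (k1 s1 = k1 s1) * qMAC qS qT qX1 qX2 Wch s1 s2 t x1 x2 y := by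
    rwa [ind_pos rfl, one_mul]
  have hM : 0 < mYKT qS qT qX1 qX2 Wch k1 y (k1 s1) t := by
    simp only [mYKT, ← Fintype.sum_prod_type']
    exact sum_pos_of_pos (fun _ => mul_nonneg (ind_nonneg _) qMAC_nonneg)
      (i := (s1, s2, x1, x2)) hpos'
  have hm : 0 < mX1X2KT qS qT qX1 qX2 Wch k1 x1 x2 (k1 s1) t := by
    simp only [mX1X2KT, ← Fintype.sum_prod_type']
    exact sum_pos_of_pos (fun _ => mul_nonneg (ind_nonneg _) qMAC_nonneg) (i := (s1, s2, y)) hpos'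
  have hg : 0 < mgK qS k1 (k1 s1) := by
    simp only [mgK, ← Fintype.sum_prod_type']
    exact sum_pos_of_pos (fun _ => mul_nonneg (ind_nonneg _) (qS.nonneg _)) (i := (s1, s2))
      (by rwa [ind_pos rfl, one_mul])
  refine le_rpow_neg_mul_of_le_logb hM (by positivity) (hγ.trans_eq ?_)
  rw [iYX1X2cKT, hS1S2cK, mYX1X2KT_eq, mKT_eq,
    logb_sub_neg_logb (by positivity) (by positivity)]
  congr 1
  field_simp

lemma mul_meanRivalLik₃_le_mYKT : qT.p t * meanRivalLik₃ qS qX1 qX2 Wch k1 s1 s2 t y ≤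
    mYKT qS qT qX1 qX2 Wch k1 y (k1 s1) t := by
  rw [meanRivalLik₃, mul_sum, Fintype.sum_prod_type]
  refine sum_le_sum fun s1' _ => sum_le_sum fun s2' _ => ?_
  have hS : 0 ≤ ∑ x1', ∑ x2', qMAC qS qT qX1 qX2 Wch s1' s2' t x1' x2' y :=
    sum_nonneg fun _ _ => sum_nonneg fun _ _ => qMAC_nonneg
  calc _ = ind (s1' ≠ s1 ∧ s2' ≠ s2 ∧ k1 s1' = k1 s1) *
        ∑ x1', ∑ x2', qMAC qS qT qX1 qX2 Wch s1' s2' t x1' x2' y := by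
        simp only [qMAC, mul_sum]
        exact sum_congr rfl fun _ _ => sum_congr rfl fun _ _ => by ring
    _ ≤ ind (k1 s1' = k1 s1) * ∑ x1', ∑ x2', qMAC qS qT qX1 qX2 Wch s1' s2' t x1' x2' y :=
        mul_le_mul_of_nonneg_right (ind_le_ind fun h => h.2.2) hS
    _ = _ := by simp only [mul_sum]

lemma meanRivalLik₃_le {γ : ℝ} (hpos : 0 < qMAC qS qT qX1 qX2 Wch s1 s2 t x1 x2 y)
    (hγ : γ ≤ iYX1X2cKT qS qT qX1 qX2 Wch k1 y x1 x2 (k1 s1) t - hS1S2cK qS k1 s1 s2) :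
    meanRivalLik₃ qS qX1 qX2 Wch k1 s1 s2 t y ≤ 2 ^ (-γ) * (qS.p (s1, s2) * (Wch x1 x2).p y) := by
  obtain ⟨-, ht, -, -, -⟩ := pos_of_qMAC_pos qS qT qX1 qX2 Wch hpos
  refine le_of_mul_le_mul_left ?_ ht
  calc _ ≤ _ := mul_meanRivalLik₃_le_mYKT qS qT qX1 qX2 Wch k1
    _ ≤ _ := mYKT_le qS qT qX1 qX2 Wch k1 hpos hγ
    _ = _ := by ring

lemma mY_le {γ : ℝ} (hpos : 0 < qMAC qS qT qX1 qX2 Wch s1 s2 t x1 x2 y)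
    (hγ : γ ≤ iYX1X2 qS qT qX1 qX2 Wch y x1 x2 - hS1S2 qS s1 s2) :
    mY qS qT qX1 qX2 Wch y ≤ 2 ^ (-γ) * (qS.p (s1, s2) * (Wch x1 x2).p y) := by
  obtain ⟨hq, -, -, -, hW⟩ := pos_of_qMAC_pos qS qT qX1 qX2 Wch hpos
  have hM : 0 < mY qS qT qX1 qX2 Wch y := by
    simp only [mY, ← Fintype.sum_prod_type']
    exact sum_pos_of_pos (fun _ => qMAC_nonneg) (i := (s1, s2, t, x1, x2)) hpos
  have hm : 0 < mX1X2 qS qT qX1 qX2 Wch x1 x2 := by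
    simp only [mX1X2, ← Fintype.sum_prod_type']
    exact sum_pos_of_pos (fun _ => qMAC_nonneg) (i := (s1, s2, t, y)) hpos
  refine le_rpow_neg_mul_of_le_logb hM (by positivity) (hγ.trans_eq ?_)
  rw [iYX1X2, hS1S2, mYX1X2_eq, logb_sub_neg_logb (by positivity) hq]
  congr 1
  field_simp

lemma meanRivalLik₄_le_mY :
    meanRivalLik₄ qS qT qX1 qX2 Wch k1 s1 s2 y ≤ mY qS qT qX1 qX2 Wch y := by
  rw [meanRivalLik₄, Fintype.sum_prod_type]
  refine sum_le_sum fun s1' _ => sum_le_sum fun s2' _ => ?_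
  calc _ = ind (s1' ≠ s1 ∧ s2' ≠ s2 ∧ k1 s1' ≠ k1 s1) *
        ∑ t', ∑ x1', ∑ x2', qMAC qS qT qX1 qX2 Wch s1' s2' t' x1' x2' y := by
        simp only [qMAC, mul_sum]
        exact sum_congr rfl fun _ _ => sum_congr rfl fun _ _ =>
          sum_congr rfl fun _ _ => by ring
    _ ≤ _ := ind_mul_le (sum_nonneg fun _ _ => sum_nonneg fun _ _ =>
        sum_nonneg fun _ _ => qMAC_nonneg) _

lemma meanRivalLik₄_le {γ : ℝ} (hpos : 0 < qMAC qS qT qX1 qX2 Wch s1 s2 t x1 x2 y)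
    (hγ : γ ≤ iYX1X2 qS qT qX1 qX2 Wch y x1 x2 - hS1S2 qS s1 s2) :
    meanRivalLik₄ qS qT qX1 qX2 Wch k1 s1 s2 y ≤ 2 ^ (-γ) * (qS.p (s1, s2) * (Wch x1 x2).p y) :=
  (meanRivalLik₄_le_mY qS qT qX1 qX2 Wch k1).trans (mY_le qS qT qX1 qX2 Wch hpos hγ)

lemma ind_typical_mul_meanRivalLik_le {γ : ℝ}
    (ht : 0 < qT.p t) (hx1 : 0 < (qX1 s1 t).p x1) (hx2 : 0 < (qX2 s2 t).p x2) :
    ind (¬macErrorEvent qS qT qX1 qX2 Wch k1 γ s1 s2 t x1 x2 y ∧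
        0 < qS.p (s1, s2) * (Wch x1 x2).p y) *
      (meanRivalLik₁ qS qX1 Wch s1 s2 t x2 y + meanRivalLik₂ qS qX2 Wch s1 s2 t x1 y +
        meanRivalLik₃ qS qX1 qX2 Wch k1 s1 s2 t y + meanRivalLik₄ qS qT qX1 qX2 Wch k1 s1 s2 y) ≤
      4 * 2 ^ (-γ) * (qS.p (s1, s2) * (Wch x1 x2).p y) := by
  have hA : 0 ≤ qS.p (s1, s2) * (Wch x1 x2).p y := mul_nonneg (qS.nonneg _) ((Wch x1 x2).nonneg y)
  by_cases h : ¬macErrorEvent qS qT qX1 qX2 Wch k1 γ s1 s2 t x1 x2 y ∧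
      0 < qS.p (s1, s2) * (Wch x1 x2).p y
  · rw [ind_pos h, one_mul]
    have hpos : 0 < qMAC qS qT qX1 qX2 Wch s1 s2 t x1 x2 y := by
      have hA' := h.2
      rw [show qMAC qS qT qX1 qX2 Wch s1 s2 t x1 x2 y =
          qT.p t * (qX1 s1 t).p x1 * (qX2 s2 t).p x2 * (qS.p (s1, s2) * (Wch x1 x2).p y) by
        unfold qMAC; ring]
      positivity
    have hγ := h.1
    simp only [macErrorEvent, not_or, not_lt] at hγ
    linarith [meanRivalLik₁_le qS qT qX1 qX2 Wch hpos hγ.1,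
      meanRivalLik₂_le qS qT qX1 qX2 Wch hpos hγ.2.1,
      meanRivalLik₃_le qS qT qX1 qX2 Wch k1 hpos hγ.2.2.1,
      meanRivalLik₄_le qS qT qX1 qX2 Wch k1 hpos hγ.2.2.2]
  · rw [ind_neg h, zero_mul]
    exact mul_nonneg (by positivity) hA

end JointLaw

section RandomCoding

variable [DecidableEq K] [DecidableEq S1] [DecidableEq S2]
  (qS : FinPMF (S1 × S2)) (qT : FinPMF T) (qX1 : S1 → T → FinPMF X1)
  (qX2 : S2 → T → FinPMF X2) (Wch : X1 → X2 → FinPMF Y) {k1 : S1 → K} {k2 : S2 → K}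
  {s1 : S1} {s2 : S2}

lemma codebookExpect_mul_rivals₁ {y : Y} (hk : ∀ s1 s2, 0 < qS.p (s1, s2) → k1 s1 = k2 s2)
    (hk0 : k2 s2 = k1 s1) (f : T → X1 → X2 → ℝ) :
    codebookExpect qT qX1 qX2 k1 k2 (fun tb c1 c2 => f (tb (k1 s1)) (c1 s1) (c2 s2) *
      rivalLik₁ qS Wch c1 c2 s1 s2 y) =
    inputExpect qT qX1 qX2 s1 s2 fun t x1 x2 =>
      f t x1 x2 * meanRivalLik₁ qS qX1 Wch s1 s2 t x2 y := by
  simp only [rivalLik₁, ← mul_assoc (ind _)]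
  refine codebookExpect_pinned_mul_sum qT qX1 qX2 k1 k2 f
    (fun s1' => ind (s1' ≠ s1) * qS.p (s1', s2)) (fun s1' _ c1 c2 => (Wch (c1 s1') (c2 s2)).p y)
    (fun s1' t _ x2 => ∑ x1', (qX1 s1' t).p x1' * (Wch x1' x2).p y) fun s1' ha => ?_
  obtain ⟨hne, hq⟩ := of_ind_mul_ne_zero ha
  have hk' : k1 s1' = k1 s1 := (hk _ _ (lt_of_le_of_ne (qS.nonneg _) (Ne.symm hq))).trans hk0
  refine (codebookExpect_rival₁ qT qX1 qX2 k1 k2 hk0 hne hk'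
    fun t x1 x2 x1' => f t x1 x2 * (Wch x1' x2).p y).trans ?_
  simp only [mul_sum, mul_left_comm]

lemma codebookExpect_mul_rivals₂ {y : Y} (hk : ∀ s1 s2, 0 < qS.p (s1, s2) → k1 s1 = k2 s2)
    (hk0 : k2 s2 = k1 s1) (f : T → X1 → X2 → ℝ) :
    codebookExpect qT qX1 qX2 k1 k2 (fun tb c1 c2 => f (tb (k1 s1)) (c1 s1) (c2 s2) *
      rivalLik₂ qS Wch c1 c2 s1 s2 y) =
    inputExpect qT qX1 qX2 s1 s2 fun t x1 x2 =>
      f t x1 x2 * meanRivalLik₂ qS qX2 Wch s1 s2 t x1 y := by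
  simp only [rivalLik₂, ← mul_assoc (ind _)]
  refine codebookExpect_pinned_mul_sum qT qX1 qX2 k1 k2 f
    (fun s2' => ind (s2' ≠ s2) * qS.p (s1, s2')) (fun s2' _ c1 c2 => (Wch (c1 s1) (c2 s2')).p y)
    (fun s2' t x1 _ => ∑ x2', (qX2 s2' t).p x2' * (Wch x1 x2').p y) fun s2' ha => ?_
  obtain ⟨hne, hq⟩ := of_ind_mul_ne_zero ha
  have hk' : k2 s2' = k1 s1 := (hk _ _ (lt_of_le_of_ne (qS.nonneg _) (Ne.symm hq))).symm
  refine (codebookExpect_rival₂ qT qX1 qX2 k1 k2 hk0 hne hk'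
    fun t x1 x2 x2' => f t x1 x2 * (Wch x1 x2').p y).trans ?_
  simp only [mul_sum, mul_left_comm]

lemma codebookExpect_mul_rivals₃ {y : Y} (hk : ∀ s1 s2, 0 < qS.p (s1, s2) → k1 s1 = k2 s2)
    (hk0 : k2 s2 = k1 s1) (f : T → X1 → X2 → ℝ) :
    codebookExpect qT qX1 qX2 k1 k2 (fun tb c1 c2 => f (tb (k1 s1)) (c1 s1) (c2 s2) *
      rivalLik₃ qS Wch k1 c1 c2 s1 s2 y) =
    inputExpect qT qX1 qX2 s1 s2 fun t x1 x2 =>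
      f t x1 x2 * meanRivalLik₃ qS qX1 qX2 Wch k1 s1 s2 t y := by
  simp only [rivalLik₃, ← mul_assoc (ind _)]
  refine codebookExpect_pinned_mul_sum qT qX1 qX2 k1 k2 f
    (fun s' => ind (s'.1 ≠ s1 ∧ s'.2 ≠ s2 ∧ k1 s'.1 = k1 s1) * qS.p s')
    (fun s' _ c1 c2 => (Wch (c1 s'.1) (c2 s'.2)).p y)
    (fun s' t _ _ => ∑ x1', (qX1 s'.1 t).p x1' * ∑ x2', (qX2 s'.2 t).p x2' * (Wch x1' x2').p y)
    fun s' ha => ?_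
  obtain ⟨⟨hne1, hne2, hk1⟩, hq⟩ := of_ind_mul_ne_zero ha
  have hk2 : k2 s'.2 = k1 s1 := (hk _ _ (lt_of_le_of_ne (qS.nonneg _) (Ne.symm hq))).symm.trans hk1
  refine (codebookExpect_rival₃ qT qX1 qX2 k1 k2 hk0 hne1 hne2 hk1 hk2
    fun t x1 x2 x1' x2' => f t x1 x2 * (Wch x1' x2').p y).trans ?_
  simp only [mul_sum, mul_left_comm]

lemma codebookExpect_mul_rivals₄ {y : Y} (hk : ∀ s1 s2, 0 < qS.p (s1, s2) → k1 s1 = k2 s2)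
    (hk0 : k2 s2 = k1 s1) (f : T → X1 → X2 → ℝ) :
    codebookExpect qT qX1 qX2 k1 k2 (fun tb c1 c2 => f (tb (k1 s1)) (c1 s1) (c2 s2) *
      rivalLik₄ qS Wch k1 c1 c2 s1 s2 y) =
    inputExpect qT qX1 qX2 s1 s2 fun t x1 x2 =>
      f t x1 x2 * meanRivalLik₄ qS qT qX1 qX2 Wch k1 s1 s2 y := by
  simp only [rivalLik₄, ← mul_assoc (ind _)]
  refine codebookExpect_pinned_mul_sum qT qX1 qX2 k1 k2 f
    (fun s' => ind (s'.1 ≠ s1 ∧ s'.2 ≠ s2 ∧ k1 s'.1 ≠ k1 s1) * qS.p s')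
    (fun s' _ c1 c2 => (Wch (c1 s'.1) (c2 s'.2)).p y)
    (fun s' _ _ _ => ∑ t', qT.p t' *
      ∑ x1', (qX1 s'.1 t').p x1' * ∑ x2', (qX2 s'.2 t').p x2' * (Wch x1' x2').p y)
    fun s' ha => ?_
  obtain ⟨⟨hne1, hne2, hk1⟩, hq⟩ := of_ind_mul_ne_zero ha
  have hk2 : k2 s'.2 = k1 s'.1 := (hk _ _ (lt_of_le_of_ne (qS.nonneg _) (Ne.symm hq))).symm
  refine (codebookExpect_rival₄ qT qX1 qX2 k1 k2 hk0 hne1 hne2 hk1 hk2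
    fun t x1 x2 x1' x2' => f t x1 x2 * (Wch x1' x2').p y).trans ?_
  simp only [mul_sum, mul_left_comm]

lemma codebookExpect_error_le (hk : ∀ s1 s2, 0 < qS.p (s1, s2) → k1 s1 = k2 s2)
    (hk0 : k2 s2 = k1 s1) (γ : ℝ) (y : Y) :
    codebookExpect qT qX1 qX2 k1 k2 (fun _ c1 c2 => qS.p (s1, s2) * (Wch (c1 s1) (c2 s2)).p y *
        (1 - (posteriorDecoder qS Wch c1 c2 y).p (s1, s2))) ≤
      inputExpect qT qX1 qX2 s1 s2 fun t x1 x2 =>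
        (ind (macErrorEvent qS qT qX1 qX2 Wch k1 γ s1 s2 t x1 x2 y) + 4 * 2 ^ (-γ)) *
          (qS.p (s1, s2) * (Wch x1 x2).p y) := by
  set bad := fun t x1 x2 => macErrorEvent qS qT qX1 qX2 Wch k1 γ s1 s2 t x1 x2 y
  set typical := fun t x1 x2 => ind (¬bad t x1 x2 ∧ 0 < qS.p (s1, s2) * (Wch x1 x2).p y)
  calc _ ≤ codebookExpect qT qX1 qX2 k1 k2 fun tb c1 c2 =>
        ind (bad (tb (k1 s1)) (c1 s1) (c2 s2)) * (qS.p (s1, s2) * (Wch (c1 s1) (c2 s2)).p y) +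
        typical (tb (k1 s1)) (c1 s1) (c2 s2) *
          (rivalLik₁ qS Wch c1 c2 s1 s2 y + rivalLik₂ qS Wch c1 c2 s1 s2 y +
            rivalLik₃ qS Wch k1 c1 c2 s1 s2 y + rivalLik₄ qS Wch k1 c1 c2 s1 s2 y) :=
        codebookExpect_mono _ _ _ _ _ fun tb c1 c2 =>
          error_le_ind_add_rivalLik qS Wch k1 s1 s2 c1 c2 y _
    _ = inputExpect qT qX1 qX2 s1 s2 fun t x1 x2 =>
        ind (bad t x1 x2) * (qS.p (s1, s2) * (Wch x1 x2).p y) +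
        typical t x1 x2 *
          (meanRivalLik₁ qS qX1 Wch s1 s2 t x2 y + meanRivalLik₂ qS qX2 Wch s1 s2 t x1 y +
            meanRivalLik₃ qS qX1 qX2 Wch k1 s1 s2 t y +
            meanRivalLik₄ qS qT qX1 qX2 Wch k1 s1 s2 y) := by
        simp only [mul_add, codebookExpect_add, inputExpect_add]
        rw [codebookExpect_pinned qT qX1 qX2 k1 k2 hk0
            fun t x1 x2 => ind (bad t x1 x2) * (qS.p (s1, s2) * (Wch x1 x2).p y),
          codebookExpect_mul_rivals₁ qS qT qX1 qX2 Wch hk hk0 typical,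
          codebookExpect_mul_rivals₂ qS qT qX1 qX2 Wch hk hk0 typical,
          codebookExpect_mul_rivals₃ qS qT qX1 qX2 Wch hk hk0 typical,
          codebookExpect_mul_rivals₄ qS qT qX1 qX2 Wch hk hk0 typical]
    _ ≤ _ := inputExpect_mono_of_pos _ _ _ _ _ fun t x1 x2 ht hx1 hx2 => by
        rw [add_mul]
        exact add_le_add le_rfl (ind_typical_mul_meanRivalLik_le qS qT qX1 qX2 Wch k1 ht hx1 hx2)

lemma codebookExpect_sum_error_le (hk : ∀ s1 s2, 0 < qS.p (s1, s2) → k1 s1 = k2 s2) (γ : ℝ)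
    (s1 : S1) (s2 : S2) :
    ∑ y, codebookExpect qT qX1 qX2 k1 k2 (fun _ c1 c2 => qS.p (s1, s2) *
        (Wch (c1 s1) (c2 s2)).p y * (1 - (posteriorDecoder qS Wch c1 c2 y).p (s1, s2))) ≤
      ∑ t, ∑ x1, ∑ x2, ∑ y, qMAC qS qT qX1 qX2 Wch s1 s2 t x1 x2 y *
        (ind (macErrorEvent qS qT qX1 qX2 Wch k1 γ s1 s2 t x1 x2 y) + 4 * 2 ^ (-γ)) := by
  rcases (qS.nonneg (s1, s2)).eq_or_lt with hq | hq
  · simp only [← hq, zero_mul, sum_const_zero, codebookExpect_const]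
    exact sum_nonneg fun _ _ => sum_nonneg fun _ _ => sum_nonneg fun _ _ =>
      sum_nonneg fun _ _ => mul_nonneg qMAC_nonneg (add_nonneg (ind_nonneg _) (by positivity))
  refine (sum_le_sum fun y _ =>
    codebookExpect_error_le qS qT qX1 qX2 Wch hk (hk s1 s2 hq).symm γ y).trans_eq ?_
  rw [← inputExpect_sum]
  simp only [inputExpect, qMAC, mul_sum]
  exact sum_congr rfl fun _ _ => sum_congr rfl fun _ _ =>
    sum_congr rfl fun _ _ => sum_congr rfl fun _ _ => by ring

end RandomCoding

theorem oneShot_jscc_mac_loosened_general (qS : FinPMF (S1 × S2)) (Wch : X1 → X2 → FinPMF Y)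
    (k1 : S1 → K) (k2 : S2 → K)
    (hk : ∀ s1 s2, 0 < qS.p (s1, s2) → k1 s1 = k2 s2)
    (qT : FinPMF T) (qX1 : S1 → T → FinPMF X1) (qX2 : S2 → T → FinPMF X2)
    (γ : ℝ) :
    ∃ (enc1 : S1 → FinPMF X1) (enc2 : S2 → FinPMF X2) (dec : Y → FinPMF (S1 × S2)),
      pErrorMAC qS Wch enc1 enc2 dec ≤
        (∑ s1 : S1, ∑ s2 : S2, ∑ t : T, ∑ x1 : X1, ∑ x2 : X2, ∑ y : Y,
          qMAC qS qT qX1 qX2 Wch s1 s2 t x1 x2 y *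
          ind (iYX1cX2S2T qS qT qX1 qX2 Wch y x1 x2 s2 t - hS1cS2 qS s1 s2 < γ ∨
               iYX2cX1S1T qS qT qX1 qX2 Wch y x1 x2 s1 t - hS2cS1 qS s1 s2 < γ ∨
               iYX1X2cKT qS qT qX1 qX2 Wch k1 y x1 x2 (k1 s1) t -
                 hS1S2cK qS k1 s1 s2 < γ ∨
               iYX1X2 qS qT qX1 qX2 Wch y x1 x2 - hS1S2 qS s1 s2 < γ))
        + 4 * (2 : ℝ) ^ (-γ) := by
  classical
  obtain ⟨-, c1, c2, hle⟩ := exists_le_codebookExpect qT qX1 qX2 k1 k2 fun _ c1 c2 =>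
    pErrorMAC qS Wch (fun s1 => FinPMF.dirac (c1 s1)) (fun s2 => FinPMF.dirac (c2 s2))
      (posteriorDecoder qS Wch c1 c2)
  refine ⟨fun s1 => FinPMF.dirac (c1 s1), fun s2 => FinPMF.dirac (c2 s2),
    posteriorDecoder qS Wch c1 c2, hle.trans ?_⟩
  simp only [pErrorMAC_dirac, codebookExpect_sum]
  refine (sum_le_sum fun s1 _ => sum_le_sum fun s2 _ =>
    codebookExpect_sum_error_le qS qT qX1 qX2 Wch hk γ s1 s2).trans_eq ?_
  simp only [mul_add, sum_add_distrib, ← sum_mul, qMAC_sum, one_mul]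
  rfl

/-- Loosened one-shot bound for joint source-channel coding over a MAC. -/
theorem oneShot_jscc_mac_loosened (qS : FinPMF (S1 × S2)) (Wch : X1 → X2 → FinPMF Y)
    (k1 : S1 → K) (k2 : S2 → K)
    (hk : ∀ s1 s2, 0 < qS.p (s1, s2) → k1 s1 = k2 s2)
    (qT : FinPMF T) (qX1 : S1 → T → FinPMF X1) (qX2 : S2 → T → FinPMF X2)
    (γ : ℝ) (hγ : 0 < γ) :
    ∃ (enc1 : S1 → FinPMF X1) (enc2 : S2 → FinPMF X2) (dec : Y → FinPMF (S1 × S2)),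
      pErrorMAC qS Wch enc1 enc2 dec ≤
        (∑ s1 : S1, ∑ s2 : S2, ∑ t : T, ∑ x1 : X1, ∑ x2 : X2, ∑ y : Y,
          qMAC qS qT qX1 qX2 Wch s1 s2 t x1 x2 y *
          ind (iYX1cX2S2T qS qT qX1 qX2 Wch y x1 x2 s2 t - hS1cS2 qS s1 s2 < γ ∨
               iYX2cX1S1T qS qT qX1 qX2 Wch y x1 x2 s1 t - hS2cS1 qS s1 s2 < γ ∨
               iYX1X2cKT qS qT qX1 qX2 Wch k1 y x1 x2 (k1 s1) t -
                 hS1S2cK qS k1 s1 s2 < γ ∨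
               iYX1X2 qS qT qX1 qX2 Wch y x1 x2 - hS1S2 qS s1 s2 < γ))
        + 4 * (2 : ℝ) ^ (-γ) :=
  oneShot_jscc_mac_loosened_general qS Wch k1 k2 hk qT qX1 qX2 γ
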